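/- arXiv:2605.27793 — 3 statements merged into one kernel-verified Lean document; each statement's English description precedes it below -/
import Mathlib

section
/- Let f_j : [-δ, δ] → ℝ be a sequence of monotone increasing functions such that for some λ > 0 and all j and all x ∈ [-δ, δ], f_j(x) > x + λ x^{2k} + ε (where k ≥ 1 and ε > 0). Then there exists a constant C₁ > 0 (depending only on λ, k, δ, but not on ε) and ε₀ > 0 such that for all 0 < ε < ε₀, setting N₁ = ⌈C₁ ε^{-(2k-1)/(2k)}⌉, the composition f_{N₁} ∘ ⋯ ∘ f_1 applied to -δ is at least δ. -/
/-- Orbit under a sequence of maps: `orb f x n = f (n-1) (⋯ (f 0 x))`. -/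
noncomputable def orb (f : ℕ → ℝ → ℝ) (x : ℝ) : ℕ → ℝ
  | 0 => x
  | n + 1 => f n (orb f x n)

/-!
Put `q = 2k - 1` and `r = ε ^ (1 / 2k)`, so that `r ^ (-q) = ε ^ (-q / 2k)`, and split
`[-δ, δ]` into `[-δ, -r)`, `[-r, r)` and `[r, δ)`. On `[-δ, -r)` the potential `|x| ^ (-q)`
grows by at least `λ` per step, and on `[r, δ)` the potential `-x ^ (-q)` grows by at least
`λ / (1 + λ δ ^ q)`; both potentials range over an interval of length at most `r ^ (-q)`.
On `[-r, r)` the orbit advances by at least `ε` per step, so it crosses in at most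
`2r / ε = 2 r ^ (-q)` steps. Altogether the orbit reaches `δ` within `O(r ^ (-q))` steps.
-/

open Set

theorem exists_le_of_potential_increase {x : ℕ → ℝ} {Φ : ℝ → ℝ} {a b c A B : ℝ}
    (hc : 0 < c) (hAB : A ≤ B) (hΦ : ∀ t ∈ Ico a b, A ≤ Φ t ∧ Φ t ≤ B)
    (hstep : ∀ n, x n ∈ Ico a b →
      a ≤ x (n + 1) ∧ (x (n + 1) < b → Φ (x n) + c ≤ Φ (x (n + 1))))
    {m : ℕ} (hm : a ≤ x m) :
    ∃ n : ℕ, (n : ℝ) ≤ m + (B - A) / c + 1 ∧ b ≤ x n := by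
  set N := ⌊(B - A) / c⌋₊ + 1
  have hN : B - A < N * c := by
    have := Nat.lt_floor_add_one ((B - A) / c)
    rw [div_lt_iff₀ hc] at this
    push_cast [N]
    exact this
  have hN_le : (N : ℝ) ≤ (B - A) / c + 1 := by
    push_cast [N]
    linarith [Nat.floor_le (div_nonneg (sub_nonneg.2 hAB) hc.le)]
  by_contra! hnever
  have hbelow : ∀ i ≤ N, x (m + i) < b := fun i hi =>
    hnever _ (by push_cast; linarith [(Nat.cast_le.2 hi : (i : ℝ) ≤ N)])
  have hgrow : ∀ i ≤ N, a ≤ x (m + i) ∧ Φ (x m) + i * c ≤ Φ (x (m + i)) := by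
    intro i
    induction i with
    | zero => intro _; simpa using hm
    | succ i ih =>
      intro hi
      obtain ⟨ha, hΦi⟩ := ih (by omega)
      obtain ⟨ha', hinc⟩ := hstep (m + i) ⟨ha, hbelow i (by omega)⟩
      rw [← add_assoc]
      refine ⟨ha', ?_⟩
      have := hinc (by simpa [add_assoc] using hbelow (i + 1) hi)
      push_cast
      linarith
  obtain ⟨haN, hΦN⟩ := hgrow N le_rfl
  have hlow := (hΦ _ ⟨hm, by simpa using hbelow 0 (Nat.zero_le _)⟩).1
  have hhigh := (hΦ _ ⟨haN, hbelow N le_rfl⟩).2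
  linarith

theorem inv_pow_add_le_inv_pow_of_le_sub {q : ℕ} (hq : q ≠ 0) {lam y z : ℝ} (hlam : 0 ≤ lam)
    (hy : 0 < y) (hz : 0 < z) (hzy : z ≤ y - lam * y ^ (q + 1)) :
    (y ^ q)⁻¹ + lam ≤ (z ^ q)⁻¹ := by
  set s := 1 - lam * y ^ q
  have hY : 0 < y ^ q := pow_pos hy q
  have hzs : z ≤ y * s := by rw [pow_succ] at hzy; linarith
  have hs : 0 < s := pos_of_mul_pos_right (hz.trans_le hzs) hy.le
  have hs1 : s ≤ 1 := by nlinarith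
  have hzq : z ^ q ≤ y ^ q * s :=
    calc z ^ q ≤ (y * s) ^ q := pow_le_pow_left₀ hz.le hzs q
      _ = y ^ q * s ^ q := mul_pow y s q
      _ ≤ y ^ q * s := by gcongr; exact pow_le_of_le_one hs.le hs1 hq
  calc (y ^ q)⁻¹ + lam ≤ (y ^ q * s)⁻¹ := by
        rw [← sub_nonneg]
        have : (y ^ q * s)⁻¹ - ((y ^ q)⁻¹ + lam) = lam ^ 2 * y ^ q / s := by
          field_simp
          ring
        rw [this]
        positivity
    _ ≤ (z ^ q)⁻¹ := inv_anti₀ (by positivity) hzq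

theorem inv_pow_add_le_inv_pow_of_add_le {q : ℕ} (hq : q ≠ 0) {lam D t u : ℝ} (hlam : 0 ≤ lam)
    (ht : 0 < t) (htD : t ^ q ≤ D) (htu : t + lam * t ^ (q + 1) ≤ u) :
    (u ^ q)⁻¹ + lam / (1 + lam * D) ≤ (t ^ q)⁻¹ := by
  set v := lam * t ^ q
  have hY : 0 < t ^ q := pow_pos ht q
  have hv : 0 ≤ v := by positivity
  have hvD : v ≤ lam * D := mul_le_mul_of_nonneg_left htD hlam
  have htu' : t * (1 + v) ≤ u := by rw [pow_succ] at htu; linarith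
  have huq : t ^ q * (1 + v) ≤ u ^ q :=
    calc t ^ q * (1 + v) ≤ t ^ q * (1 + v) ^ q := by
          gcongr; exact le_self_pow₀ (by linarith) hq
      _ = (t * (1 + v)) ^ q := (mul_pow t (1 + v) q).symm
      _ ≤ u ^ q := pow_le_pow_left₀ (by positivity) htu' q
  calc (u ^ q)⁻¹ + lam / (1 + lam * D) ≤ (t ^ q * (1 + v))⁻¹ + lam / (1 + v) := by
        gcongr
    _ = (t ^ q)⁻¹ := by
        field_simp
        ring

def DriftsRight (x : ℕ → ℝ) (k : ℕ) (lam ε δ : ℝ) : Prop :=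
  ∀ n, x n ∈ Icc (-δ) δ → x n + lam * x n ^ (2 * k) + ε ≤ x (n + 1)

namespace DriftsRight

variable {x : ℕ → ℝ} {k : ℕ} {lam ε δ r : ℝ}

theorem le_succ (hx : DriftsRight x k lam ε δ) (hlam : 0 ≤ lam) (hε : 0 ≤ ε) {n : ℕ}
    (hn : x n ∈ Icc (-δ) δ) : x n ≤ x (n + 1) := by
  have := (even_two_mul k).pow_nonneg (x n)
  nlinarith [hx n hn]

theorem exists_neg_le (hx : DriftsRight x k lam ε δ) (hk : k ≠ 0) (hlam : 0 < lam)
    (hε : 0 ≤ ε) (hr : 0 < r) {m : ℕ} (hm : -δ ≤ x m) :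
    ∃ n : ℕ, (n : ℝ) ≤ m + (r ^ (2 * k - 1))⁻¹ / lam + 1 ∧ -r ≤ x n := by
  have key := exists_le_of_potential_increase (b := -r)
    (Φ := fun t ↦ ((-t) ^ (2 * k - 1))⁻¹) (A := 0) (B := (r ^ (2 * k - 1))⁻¹) hlam (by positivity) ?bounds ?step hm
  · simpa using key
  case bounds =>
    intro t ⟨_, ht⟩
    have hrt : r ≤ -t := by linarith
    have : 0 < -t := hr.trans_le hrt
    exact ⟨by positivity, inv_anti₀ (by positivity) (pow_le_pow_left₀ hr.le hrt _)⟩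
  case step =>
    intro n ⟨hδn, hnr⟩
    have hmem : x n ∈ Icc (-δ) δ := ⟨hδn, by linarith⟩
    refine ⟨hδn.trans (hx.le_succ hlam.le hε hmem), fun hlt ↦ ?_⟩
    refine inv_pow_add_le_inv_pow_of_le_sub (by omega) hlam.le (by linarith) (by linarith) ?_
    rw [show 2 * k - 1 + 1 = 2 * k by omega, (even_two_mul k).neg_pow]
    linarith [hx n hmem]

theorem exists_le_of_neg_le (hx : DriftsRight x k lam ε δ) (hlam : 0 ≤ lam) (hε : 0 < ε)
    (hr : 0 ≤ r) (hrδ : r ≤ δ) {m : ℕ} (hm : -r ≤ x m) :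
    ∃ n : ℕ, (n : ℝ) ≤ m + 2 * r / ε + 1 ∧ r ≤ x n := by
  have key := exists_le_of_potential_increase (Φ := id) (A := -r) (B := r) hε (by linarith)
    (fun t ht ↦ ⟨ht.1, ht.2.le⟩) ?step hm
  · simpa [two_mul] using key
  case step =>
    intro n ⟨hrn, hnr⟩
    have hmem : x n ∈ Icc (-δ) δ := ⟨by linarith, by linarith⟩
    have hgain := (even_two_mul k).pow_nonneg (x n)
    have hxn := hx n hmem
    exact ⟨hrn.trans (hx.le_succ hlam hε.le hmem), fun _ ↦ by simp only [id]; nlinarith⟩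

theorem exists_le_of_le (hx : DriftsRight x k lam ε δ) (hk : k ≠ 0) (hlam : 0 < lam)
    (hε : 0 ≤ ε) (hr : 0 < r) (hrδ : r ≤ δ) {m : ℕ} (hm : r ≤ x m) :
    ∃ n : ℕ, (n : ℝ) ≤ m + (r ^ (2 * k - 1))⁻¹ / (lam / (1 + lam * δ ^ (2 * k - 1))) + 1 ∧
      δ ≤ x n := by
  have hδ : 0 < δ := hr.trans_le hrδ
  have key := exists_le_of_potential_increase (b := δ)
    (c := lam / (1 + lam * δ ^ (2 * k - 1))) (Φ := fun t ↦ -(t ^ (2 * k - 1))⁻¹)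
    (A := -(r ^ (2 * k - 1))⁻¹) (B := 0) (by positivity) (by simp only [neg_nonpos]; positivity)
    ?bounds ?step hm
  · simpa using key
  case bounds =>
    intro t ⟨hrt, _⟩
    have : 0 < t := hr.trans_le hrt
    exact ⟨neg_le_neg (inv_anti₀ (by positivity) (pow_le_pow_left₀ hr.le hrt _)),
      by simp only [neg_nonpos]; positivity⟩
  case step =>
    intro n ⟨hrn, hnδ⟩
    have hmem : x n ∈ Icc (-δ) δ := ⟨by linarith, hnδ.le⟩
    refine ⟨hrn.trans (hx.le_succ hlam.le hε hmem), fun _ ↦ ?_⟩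
    have := inv_pow_add_le_inv_pow_of_add_le (q := 2 * k - 1) (u := x (n + 1)) (by omega)
      hlam.le (hr.trans_le hrn) (pow_le_pow_left₀ (hr.le.trans hrn) hnδ.le _)
      (by rw [show 2 * k - 1 + 1 = 2 * k by omega]; linarith [hx n hmem])
    linarith

theorem exists_delta_le (hx : DriftsRight x k lam ε δ) (hk : k ≠ 0) (hlam : 0 < lam)
    (hr : 0 < r) (hrδ : r ≤ δ) (hrε : r ^ (2 * k) = ε) (h0 : -δ ≤ x 0) :
    ∃ n : ℕ, (n : ℝ) ≤ (2 / lam + 2 + 4 * δ ^ (2 * k - 1)) * (r ^ (2 * k - 1))⁻¹ ∧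
      δ ≤ x n := by
  have hε : 0 < ε := hrε ▸ by positivity
  obtain ⟨n₁, hn₁, h₁⟩ := hx.exists_neg_le hk hlam hε.le hr h0
  obtain ⟨n₂, hn₂, h₂⟩ := hx.exists_le_of_neg_le hlam.le hε hr.le hrδ h₁
  obtain ⟨n₃, hn₃, h₃⟩ := hx.exists_le_of_le hk hlam hε.le hr hrδ h₂
  refine ⟨n₃, ?_, h₃⟩
  set E := (r ^ (2 * k - 1))⁻¹
  set D := δ ^ (2 * k - 1)
  have hD : 0 < D := by have := hr.trans_le hrδ; positivity
  have hmid : 2 * r / ε = 2 * E := by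
    rw [← hrε, show 2 * k = 2 * k - 1 + 1 by omega, pow_succ]
    simp only [E]
    field_simp
  have hright : E / (lam / (1 + lam * D)) = E / lam + D * E := by
    field_simp
  -- absorbs the three `+ 1`s, one per region, into the constant
  have hDE : 1 ≤ D * E := by
    rw [← div_eq_mul_inv, one_le_div (by positivity)]
    exact pow_le_pow_left₀ hr.le hrδ _
  push_cast at hn₁
  linarith [show (2 / lam + 2 + 4 * D) * E = 2 * (E / lam) + 2 * E + 4 * (D * E) by ring]

end DriftsRight

theorem Real.pow_rpow_neg_sub_one_div {r : ℝ} (hr : 0 ≤ r) {n : ℕ} (hn : n ≠ 0) :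
    (r ^ n) ^ (-(((n : ℝ) - 1) / n)) = (r ^ (n - 1))⁻¹ := by
  have hn' : (n : ℝ) ≠ 0 := Nat.cast_ne_zero.2 hn
  rw [← Real.rpow_natCast_mul hr, ← Real.rpow_natCast, ← Real.rpow_neg hr,
    Nat.cast_sub (Nat.one_le_iff_ne_zero.2 hn)]
  congr 1
  field_simp
  push_cast
  ring

theorem stmt0_general (k : ℕ) (hk : 1 ≤ k) (δ lam : ℝ) (hδ : 0 < δ) (hlam : 0 < lam)
    (f : ℕ → ℝ → ℝ) :
    ∃ C₁ > (0 : ℝ), ∃ ε₀ > (0 : ℝ), ∀ ε : ℝ, 0 < ε → ε < ε₀ →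
      (∀ j, ∀ x ∈ Set.Icc (-δ) δ, x + lam * x ^ (2 * k) + ε < f j x) →
      ∃ n ≤ ⌈C₁ * ε ^ (-(((2 * k : ℝ) - 1) / (2 * k)))⌉₊,
        δ ≤ orb f (-δ) n := by
  refine ⟨2 / lam + 2 + 4 * δ ^ (2 * k - 1), by positivity, δ ^ (2 * k), by positivity, ?_⟩
  intro ε hε hεδ hf
  have h2k : 2 * k ≠ 0 := by omega
  set r := ε ^ ((↑(2 * k) : ℝ)⁻¹)
  have hr : 0 < r := by positivity
  have hrε : r ^ (2 * k) = ε := Real.rpow_inv_natCast_pow hε.le h2k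
  have hrδ : r ≤ δ := by
    rw [← hrε] at hεδ
    exact ((pow_lt_pow_iff_left₀ hr.le hδ.le h2k).1 hεδ).le
  have hdrift : DriftsRight (orb f (-δ)) k lam ε δ := fun n hn ↦ (hf n _ hn).le
  obtain ⟨n, hn, hδn⟩ := hdrift.exists_delta_le (by omega) hlam hr hrδ hrε le_rfl
  have hE := Real.pow_rpow_neg_sub_one_div hr.le h2k
  push_cast at hE
  refine ⟨n, ?_, hδn⟩
  rw [← hrε, hE]
  exact_mod_cast hn.trans (Nat.le_ceil _)

theorem stmt0 (k : ℕ) (hk : 1 ≤ k) (δ lam : ℝ) (hδ : 0 < δ) (hlam : 0 < lam)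
    (f : ℕ → ℝ → ℝ) (hmono : ∀ j, MonotoneOn (f j) (Set.Icc (-δ) δ)) :
    ∃ C₁ > (0 : ℝ), ∃ ε₀ > (0 : ℝ), ∀ ε : ℝ, 0 < ε → ε < ε₀ →
      (∀ j, ∀ x ∈ Set.Icc (-δ) δ, x + lam * x ^ (2 * k) + ε < f j x) →
      ∃ n ≤ ⌈C₁ * ε ^ (-(((2 * k : ℝ) - 1) / (2 * k)))⌉₊,
        δ ≤ orb f (-δ) n :=
  stmt0_general k hk δ lam hδ hlam f
end

section
/- Let f : ℝ → ℝ be any function and suppose (x_m) is a sequence with x_0 = -δ, x_{m+1} ≥ x_m + λ x_m^{2k} for all m, where λ > 0, δ > 0, k ≥ 1, and suppose x_m ≤ -ε^{1/(2k)} for all m < M. Then M ≤ ε^{-(2k-1)/(2k)}/(λ(2k-1)) + 1. -/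
/-!
With `y = -x` the recursion reads `y (m+1) ≤ y m - λ y m ^ (2k)`, and along it the potential
`1 / ((2k-1) y ^ (2k-1))` grows by at least `λ` per step: this is the tangent-line inequality for
the convex function `y ↦ y ^ (-(2k-1))`, a discrete form of comparing the number of steps with
`∫ dy / (λ y ^ (2k))`. As long as `y ≥ ε ^ (1/(2k))` the potential stays below
`ε ^ (-(2k-1)/(2k)) / (2k-1)`, which bounds the number of steps.
-/

lemma mul_sub_div_pow_le_inv_pow_sub_inv_pow (n : ℕ) {u v : ℝ} (hu : 0 < u) (hv : 0 < v) :
    (n + 1) * (u - v) / u ^ (n + 2) ≤ (v ^ (n + 1))⁻¹ - (u ^ (n + 1))⁻¹ := by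
  have bernoulli : (u ^ (n + 1))⁻¹ + (n + 1) * (u ^ n)⁻¹ * (v⁻¹ - u⁻¹) ≤ (v ^ (n + 1))⁻¹ := by
    simpa [inv_pow] using pow_add_mul_le_add_pow (a := u⁻¹) (b := v⁻¹ - u⁻¹) (by positivity)
      (by linarith [inv_pos.2 hu, inv_pos.2 hv]) (n + 1)
  have hquot : (u - v) / u ≤ (u - v) / v := by
    rw [div_le_div_iff₀ hu hv]; nlinarith [sq_nonneg (u - v)]
  calc (n + 1) * (u - v) / u ^ (n + 2) = (n + 1) * (u ^ n)⁻¹ * u⁻¹ * ((u - v) / u) := by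
        field_simp; ring
    _ ≤ (n + 1) * (u ^ n)⁻¹ * u⁻¹ * ((u - v) / v) := by gcongr
    _ = (n + 1) * (u ^ n)⁻¹ * (v⁻¹ - u⁻¹) := by field_simp
    _ ≤ (v ^ (n + 1))⁻¹ - (u ^ (n + 1))⁻¹ := by linarith

lemma inv_pow_add_mul_le_inv_pow_of_le_sub (n : ℕ) {lam u v : ℝ} (hu : 0 < u) (hv : 0 < v)
    (hvu : v ≤ u - lam * u ^ (n + 2)) :
    (u ^ (n + 1))⁻¹ + (n + 1) * lam ≤ (v ^ (n + 1))⁻¹ := by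
  have hlam : lam ≤ (u - v) / u ^ (n + 2) := by
    rw [le_div_iff₀ (by positivity)]; linarith
  have : (n + 1) * lam ≤ (n + 1) * (u - v) / u ^ (n + 2) := by
    rw [mul_div_assoc]; gcongr
  linarith [mul_sub_div_pow_le_inv_pow_sub_inv_pow n hu hv]

lemma le_div_add_one_of_le_sub_mul_pow (n : ℕ) {lam t : ℝ} (hlam : 0 < lam) (ht : 0 < t)
    (y : ℕ → ℝ) (M : ℕ) (hstep : ∀ m, m + 1 < M → y (m + 1) ≤ y m - lam * y m ^ (n + 2))
    (hM : ∀ m < M, t ≤ y m) :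
    (M : ℝ) ≤ (t ^ (n + 1))⁻¹ / (lam * (n + 1)) + 1 := by
  have hpos : ∀ m < M, 0 < y m := fun m hm => ht.trans_le (hM m hm)
  have potential : ∀ m < M, (y 0 ^ (n + 1))⁻¹ + m * ((n + 1) * lam) ≤ (y m ^ (n + 1))⁻¹ := by
    intro m
    induction m with
    | zero => simp
    | succ m ih =>
      intro hm
      have := inv_pow_add_mul_le_inv_pow_of_le_sub n (hpos m (by omega)) (hpos (m + 1) hm)
        (hstep m hm)
      push_cast
      linarith [ih (by omega)]
  obtain _ | N := M
  · simp only [CharP.cast_eq_zero]; positivity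
  have hN := potential N (by omega)
  have hy0 : 0 ≤ (y 0 ^ (n + 1))⁻¹ := by have := hpos 0 (by omega); positivity
  have hyN : (y N ^ (n + 1))⁻¹ ≤ (t ^ (n + 1))⁻¹ :=
    inv_anti₀ (by positivity) (pow_le_pow_left₀ ht.le (hM N (by omega)) _)
  have : (N : ℝ) ≤ (t ^ (n + 1))⁻¹ / (lam * (n + 1)) := by
    rw [le_div_iff₀ (by positivity)]; linarith
  push_cast
  linarith

theorem stmt2_general (k : ℕ) (hk : 1 ≤ k) (lam ε : ℝ) (hlam : 0 < lam) (hε : 0 < ε) (x : ℕ → ℝ)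
    (hstep : ∀ m, x m + lam * x m ^ (2 * k) ≤ x (m + 1))
    (M : ℕ) (hM : ∀ m < M, x m ≤ -(ε ^ ((1 : ℝ) / (2 * k)))) :
    (M : ℝ) ≤ ε ^ (-(((2 * k : ℝ) - 1) / (2 * k))) / (lam * (2 * k - 1)) + 1 := by
  obtain ⟨n, hn⟩ : ∃ n, 2 * k = n + 2 := ⟨2 * k - 2, by omega⟩
  have hn_real : (n : ℝ) + 1 = 2 * k - 1 := by
    have := congrArg (Nat.cast (R := ℝ)) hn
    push_cast at this; linarith
  set t := ε ^ ((1 : ℝ) / (2 * k))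
  have ht : 0 < t := by positivity
  have ht_pow : ε ^ (-(((2 * k : ℝ) - 1) / (2 * k))) = (t ^ (n + 1))⁻¹ := by
    rw [Real.rpow_neg hε.le, ← Real.rpow_natCast, ← Real.rpow_mul hε.le]
    push_cast
    rw [hn_real]
    field_simp
  have hneg_step : ∀ m, m + 1 < M → -x (m + 1) ≤ -x m - lam * (-x m) ^ (n + 2) := by
    intro m _
    rw [← hn, Even.neg_pow (even_two_mul k)]
    linarith [hstep m]
  have := le_div_add_one_of_le_sub_mul_pow n hlam ht (fun m => -x m) M hneg_step
    (fun m hm => le_neg_of_le_neg (hM m hm))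
  rwa [ht_pow, ← hn_real]

theorem stmt2 (k : ℕ) (hk : 1 ≤ k) (δ lam ε : ℝ) (hδ : 0 < δ) (hlam : 0 < lam)
    (hε : 0 < ε) (hεδ : ε < δ ^ (2 * k))
    (x : ℕ → ℝ) (h0 : x 0 = -δ)
    (hstep : ∀ m, x m + lam * x m ^ (2 * k) ≤ x (m + 1))
    (M : ℕ) (hM : ∀ m < M, x m ≤ -(ε ^ ((1 : ℝ) / (2 * k)))) :
    (M : ℝ) ≤ ε ^ (-(((2 * k : ℝ) - 1) / (2 * k))) / (lam * (2 * k - 1)) + 1 :=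
  stmt2_general k hk lam ε hlam hε x hstep M hM
end

section
/- For λ > 0, x ≥ L > 0, and k ≥ 1: if a sequence satisfies x_{m+1} ≥ x_m + λ x_m^{2k} and x_0 ≥ L, then x_m ≥ 2L after at most ⌈1/(λ L^{2k-1})⌉ steps. Consequently, the total number of steps for such a sequence to go from ε^{1/(2k)} to at least δ is at most n + ε^{-(2k-1)/(2k)} · 2^{2k-1}/(λ(2^{2k-1}-1)), where n = ⌈log₂(δ / ε^{1/(2k)})⌉. -/
/-!
While `x ≥ L`, each step of `x (m + 1) ≥ x m + λ (x m)^(p+1)` adds at least `λ L^(p+1)`, so after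
`⌈1 / (λ L^p)⌉` steps `x` has grown by `L`, i.e. doubled. Starting from `E` and doubling through
the scales `2^i E`, the `i`-th doubling costs at most `1 + 2^(-i p) / (λ E^p)` steps; summing the
geometric series gives `n + 2^p / (λ E^p (2^p - 1))` steps for `n` doublings, and
`n = ⌈log₂ (δ / E)⌉` doublings reach `δ`.
-/

open Finset

/-- The exponent is written `p + 1` (the paper's `2k`) so that the doubling time involves `L ^ p`
without truncated subtraction. -/
def PowerGrowth (lam : ℝ) (p : ℕ) (x : ℕ → ℝ) : Prop :=
  ∀ m, x m + lam * x m ^ (p + 1) ≤ x (m + 1)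

namespace PowerGrowth

variable {lam : ℝ} {p : ℕ} {x : ℕ → ℝ}

theorem shift (hx : PowerGrowth lam p x) (n : ℕ) : PowerGrowth lam p (fun m => x (n + m)) :=
  fun m => hx (n + m)

theorem add_nat_mul_le (hx : PowerGrowth lam p x) (hlam : 0 ≤ lam) {L : ℝ} (hL : 0 ≤ L)
    (h0 : L ≤ x 0) (m : ℕ) : L + m * (lam * L ^ (p + 1)) ≤ x m := by
  induction m with
  | zero => simpa using h0
  | succ m ih =>
    have hLx : L ≤ x m := le_trans (le_add_of_nonneg_right (by positivity)) ih
    have hinc : lam * L ^ (p + 1) ≤ lam * x m ^ (p + 1) := by gcongr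
    push_cast
    linarith [hx m]

theorem two_mul_le_apply_ceil (hx : PowerGrowth lam p x) (hlam : 0 < lam) {L : ℝ}
    (hL : 0 < L) (h0 : L ≤ x 0) : 2 * L ≤ x ⌈1 / (lam * L ^ p)⌉₊ := by
  set N := ⌈1 / (lam * L ^ p)⌉₊
  have hN : 1 ≤ N * (lam * L ^ p) :=
    (div_le_iff₀ (by positivity)).1 (Nat.le_ceil (1 / (lam * L ^ p)))
  calc 2 * L ≤ L + N * (lam * L ^ p) * L := by nlinarith
    _ = L + N * (lam * L ^ (p + 1)) := by ring
    _ ≤ x N := hx.add_nat_mul_le hlam.le hL.le h0 N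

theorem two_pow_mul_le_apply_sum (hx : PowerGrowth lam p x) (hlam : 0 < lam) {E : ℝ}
    (hE : 0 < E) (h0 : E ≤ x 0) (j : ℕ) :
    2 ^ j * E ≤ x (∑ i ∈ range j, ⌈1 / (lam * (2 ^ i * E) ^ p)⌉₊) := by
  induction j with
  | zero => simpa using h0
  | succ j ih =>
    rw [sum_range_succ, pow_succ', mul_assoc]
    exact (hx.shift _).two_mul_le_apply_ceil hlam (by positivity) ih

end PowerGrowth

theorem sum_ceil_inv_pow_mul_le {b c E : ℝ} (hb : 1 < b) (hc : 0 < c) (hE : 0 < E) {p : ℕ}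
    (hp : 1 ≤ p) (n : ℕ) :
    (∑ i ∈ range n, ⌈1 / (c * (b ^ i * E) ^ p)⌉₊ : ℝ) ≤ n + b ^ p / (c * E ^ p * (b ^ p - 1)) := by
  have hb0 : 0 < b := by linarith
  have hbp : 1 < b ^ p := one_lt_pow₀ hb (by omega)
  set r : ℝ := (b ^ p)⁻¹
  have hterm : ∀ i, 1 / (c * (b ^ i * E) ^ p) = (c * E ^ p)⁻¹ * r ^ i := by
    intro i
    rw [mul_pow, ← pow_mul, mul_comm i p, pow_mul, inv_pow]
    field_simp
  have hgeom : ∑ i ∈ range n, r ^ i ≤ (1 - r)⁻¹ := by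
    have h := geom_sum_Ico_le_of_lt_one (m := 0) (n := n) (x := r) (by positivity)
      (inv_lt_one_of_one_lt₀ hbp)
    rwa [← range_eq_Ico, pow_zero, one_div] at h
  calc (∑ i ∈ range n, ⌈1 / (c * (b ^ i * E) ^ p)⌉₊ : ℝ)
      ≤ ∑ i ∈ range n, (1 / (c * (b ^ i * E) ^ p) + 1) :=
        sum_le_sum fun i _ => (Nat.ceil_lt_add_one (by positivity)).le
    _ = n + (c * E ^ p)⁻¹ * ∑ i ∈ range n, r ^ i := by
        simp only [sum_add_distrib, hterm, ← mul_sum, sum_const, card_range, nsmul_eq_mul,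
          mul_one]
        ring
    _ ≤ n + (c * E ^ p)⁻¹ * (1 - r)⁻¹ := by gcongr
    _ = n + b ^ p / (c * E ^ p * (b ^ p - 1)) := by
        have : b ^ p - 1 ≠ 0 := by linarith
        simp only [r]
        field_simp

theorem le_pow_ceil_logb_mul {b y E : ℝ} (hb : 1 < b) (hy : 0 < y) (hE : 0 < E) :
    y ≤ b ^ ⌈Real.logb b (y / E)⌉₊ * E := by
  rw [← div_le_iff₀ hE, ← Real.rpow_natCast, ← Real.logb_le_iff_le_rpow hb (by positivity)]
  exact Nat.le_ceil _

theorem Real.rpow_neg_natCast_div {ε : ℝ} (hε : 0 ≤ ε) (p q : ℕ) :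
    ε ^ (-((p : ℝ) / q)) = ((ε ^ ((1 : ℝ) / q)) ^ p)⁻¹ := by
  rw [← Real.rpow_natCast, ← Real.rpow_mul hε, Real.rpow_neg hε]
  ring_nf

theorem stmt3_general (k : ℕ) (hk : 1 ≤ k) (lam L ε δ : ℝ)
    (hlam : 0 < lam) (hL : 0 < L) (hε : 0 < ε) (hδ : 0 < δ)
    (x : ℕ → ℝ) (hstep : ∀ m, x m + lam * x m ^ (2 * k) ≤ x (m + 1)) :
    (L ≤ x 0 → ∃ m ≤ ⌈1 / (lam * L ^ (2 * k - 1))⌉₊, 2 * L ≤ x m) ∧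
    (ε ^ ((1 : ℝ) / (2 * k)) ≤ x 0 →
      ∃ m : ℕ, (m : ℝ) ≤ (⌈Real.logb 2 (δ / ε ^ ((1 : ℝ) / (2 * k)))⌉₊ : ℝ) +
          ε ^ (-(((2 * k : ℝ) - 1) / (2 * k))) * 2 ^ (2 * k - 1) /
            (lam * (2 ^ (2 * k - 1) - 1)) ∧
        δ ≤ x m) := by
  have hk' : 2 * k = 2 * k - 1 + 1 := by omega
  have hx : PowerGrowth lam (2 * k - 1) x := fun m => hk' ▸ hstep m
  refine ⟨fun h0 => ⟨_, le_rfl, hx.two_mul_le_apply_ceil hlam hL h0⟩, fun h0 => ?_⟩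
  set E := ε ^ ((1 : ℝ) / (2 * k))
  have hE : 0 < E := by positivity
  set n := ⌈Real.logb 2 (δ / E)⌉₊
  refine ⟨_, ?_, (le_pow_ceil_logb_mul one_lt_two hδ hE).trans
    (hx.two_pow_mul_le_apply_sum hlam hE h0 n)⟩
  have hexp : ε ^ (-(((2 * k : ℝ) - 1) / (2 * k))) = (E ^ (2 * k - 1))⁻¹ := by
    have h := Real.rpow_neg_natCast_div hε.le (2 * k - 1) (2 * k)
    push_cast [Nat.cast_sub (by omega : 1 ≤ 2 * k)] at h
    exact h
  push_cast
  refine (sum_ceil_inv_pow_mul_le one_lt_two hlam hE (by omega) n).trans_eq ?_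
  rw [hexp]
  field_simp

theorem stmt3 (k : ℕ) (hk : 1 ≤ k) (lam L ε δ : ℝ)
    (hlam : 0 < lam) (hL : 0 < L) (hε : 0 < ε) (hδ : 0 < δ)
    (hεδ : ε ^ ((1 : ℝ) / (2 * k)) < δ)
    (x : ℕ → ℝ) (hstep : ∀ m, x m + lam * x m ^ (2 * k) ≤ x (m + 1)) :
    (L ≤ x 0 → ∃ m ≤ ⌈1 / (lam * L ^ (2 * k - 1))⌉₊, 2 * L ≤ x m) ∧
    (ε ^ ((1 : ℝ) / (2 * k)) ≤ x 0 →
      ∃ m : ℕ, (m : ℝ) ≤ (⌈Real.logb 2 (δ / ε ^ ((1 : ℝ) / (2 * k)))⌉₊ : ℝ) +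
          ε ^ (-(((2 * k : ℝ) - 1) / (2 * k))) * 2 ^ (2 * k - 1) /
            (lam * (2 ^ (2 * k - 1) - 1)) ∧
        δ ≤ x m) :=
  stmt3_general k hk lam L ε δ hlam hL hε hδ x hstep
end
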